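/- arXiv:2603.11773 — 2 statements merged into one kernel-verified Lean document; each statement's English description precedes it below -/
import Mathlib

section
/- Let F be a bipartite graph with at least one edge and let s = p(F). Then for all sufficiently large n, every proper edge coloring of the complete bipartite graph K_{s, n-s} contains a rainbow copy of F. -/
/-! Take a proper 2-colouring of `F` whose true class `L` has exactly `s = p(F)` vertices and
send `L` injectively to the `s`-side of `K_{s,n-s}`. Two edges of the image at the same vertex
of the big side have distinct colours because the colouring is proper, so it suffices to send the
other class to vertices of the big side whose stars carry pairwise disjoint sets of colours. Such
vertices are found greedily: every colour occurs at most once in each star of the `s`-side, so a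
chosen vertex rules out at most `s²` others, and `n ≥ s + |F| (s² + 1)` is enough. -/

open Filter SimpleGraph

/-- `G` contains a copy of `F` as a (not necessarily induced) subgraph. -/
def Contains {α β : Type} (F : SimpleGraph α) (G : SimpleGraph β) : Prop :=
  ∃ f : F →g G, Function.Injective f

/-- A proper edge coloring: edges sharing a vertex receive distinct colors. -/
def IsProperEdgeColoring {β : Type} (G : SimpleGraph β) (c : Sym2 β → ℕ) : Prop :=
  ∀ e₁ ∈ G.edgeSet, ∀ e₂ ∈ G.edgeSet, e₁ ≠ e₂ → (∃ v, v ∈ e₁ ∧ v ∈ e₂) → c e₁ ≠ c e₂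

/-- There is a rainbow copy of `F` in `G` with respect to the edge coloring `c`:
a copy of `F` all of whose edges receive pairwise distinct colors. -/
def HasRainbowCopy {α β : Type} (F : SimpleGraph α) (G : SimpleGraph β)
    (c : Sym2 β → ℕ) : Prop :=
  ∃ f : F →g G, Function.Injective f ∧
    ∀ e₁ ∈ F.edgeSet, ∀ e₂ ∈ F.edgeSet,
      c (Sym2.map f e₁) = c (Sym2.map f e₂) → e₁ = e₂

/-- The blowup of `G` with part sizes `t`. -/
def blowup {α : Type} (G : SimpleGraph α) (t : α → ℕ) :
    SimpleGraph (Σ v : α, Fin (t v)) where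
  Adj x y := G.Adj x.1 y.1
  symm := ⟨fun _ _ h => G.adj_symm h⟩
  loopless := ⟨fun x h => G.irrefl h⟩

/-- `t` describes a balanced blowup on `n` vertices: all parts are nonempty,
any two part sizes differ by at most one, and the total number of vertices is `n`. -/
def IsBalanced {α : Type} [Fintype α] (t : α → ℕ) (n : ℕ) : Prop :=
  (∀ v, 0 < t v) ∧ (∀ u v, t u ≤ t v + 1) ∧ ∑ v, t v = n

/-- The number of subgraphs of `G` isomorphic to `H`. -/
noncomputable def copyCount {α β : Type} (H : SimpleGraph α) (G : SimpleGraph β) : ℕ :=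
  Set.ncard {H' : G.Subgraph | Nonempty (H ≃g H'.coe)}

/-- The set of sizes of the smaller color class over all proper 2-colorings of the
vertices of `F`; its least element is `p(F)`. -/
def smallerClassSizes {α : Type} [Fintype α] (F : SimpleGraph α) : Set ℕ :=
  {t | ∃ χ : α → Bool, (∀ u v, F.Adj u v → χ u ≠ χ v) ∧
    t = min (Finset.univ.filter fun x => χ x = true).card
            (Finset.univ.filter fun x => χ x = false).card}

/-- The set of `j` such that `F` is a subgraph of some blowup of `C_{2j-1}`;
its greatest element is `γ(F)`. -/
def gammaSet {α : Type} (F : SimpleGraph α) : Set ℕ :=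
  {j | ∃ t : Fin (2 * j - 1) → ℕ, (∀ v, 0 < t v) ∧
    Contains F (blowup (cycleGraph (2 * j - 1)) t)}

open Function

def StarColorsDisjoint {A B κ : Type} (col : A → B → κ) (b b' : B) : Prop :=
  ∀ a a', col a b ≠ col a' b'

theorem exists_finset_card_eq_pairwise_starColorsDisjoint {A B κ : Type} [Fintype A]
    [Fintype B] (col : A → B → κ) (hcol : ∀ a, Injective (col a)) (k : ℕ)
    (hk : k * (Fintype.card A ^ 2 + 1) ≤ Fintype.card B) :
    ∃ T : Finset B, T.card = k ∧ (T : Set B).Pairwise (StarColorsDisjoint col) := by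
  classical
  induction k with
  | zero => exact ⟨∅, rfl, by simp⟩
  | succ k ih =>
    obtain ⟨T, hTcard, hT⟩ := ih (le_trans (Nat.mul_le_mul_right _ k.le_succ) hk)
    set clash : A × A × B → Finset B := fun p => {b | col p.1 b = col p.2.1 p.2.2}
    have hclash : ∀ p, (clash p).card ≤ 1 := fun p =>
      Finset.card_le_one.mpr fun b hb b' hb' => by
        simp only [clash, Finset.mem_filter_univ] at hb hb'
        exact hcol p.1 (hb.trans hb'.symm)
    have hbad : (T ∪ (Finset.univ ×ˢ Finset.univ ×ˢ T).biUnion clash).card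
        < Fintype.card B := by
      calc _ ≤ T.card + ((Finset.univ ×ˢ Finset.univ ×ˢ T).biUnion clash).card :=
            Finset.card_union_le _ _
        _ ≤ k + Fintype.card A * (Fintype.card A * k) := by
            gcongr
            · exact hTcard.le
            · refine Finset.card_biUnion_le.trans ?_
              simpa [hTcard] using Finset.sum_le_card_nsmul (Finset.univ ×ˢ Finset.univ ×ˢ T) _ 1
                fun p _ => hclash p
        _ < (k + 1) * (Fintype.card A ^ 2 + 1) := by nlinarith
        _ ≤ Fintype.card B := hk
    obtain ⟨b, -, hb⟩ := Finset.exists_mem_notMem_of_card_lt_card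
      (hbad.trans_eq Finset.card_univ.symm)
    simp only [Finset.mem_union, Finset.mem_biUnion, Finset.mem_product, Finset.mem_univ,
      true_and, not_or, not_exists, not_and, Prod.exists] at hb
    refine ⟨insert b T, by rw [Finset.card_insert_of_notMem hb.1, hTcard], ?_⟩
    rw [Finset.coe_insert, Set.pairwise_insert]
    refine ⟨hT, fun b' hb' _ => ⟨fun a a' h => hb.2 a a' b' hb' ?_, fun a a' h => hb.2 a' a b' hb' ?_⟩⟩
    · simpa [clash] using h
    · simpa [clash] using h.symm

theorem exists_injective_pairwise_starColorsDisjoint {A B κ ι : Type} [Fintype A] [Fintype B]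
    [Fintype ι] (col : A → B → κ) (hcol : ∀ a, Injective (col a))
    (hι : Fintype.card ι * (Fintype.card A ^ 2 + 1) ≤ Fintype.card B) :
    ∃ g : ι → B, Injective g ∧ Pairwise (StarColorsDisjoint col on g) := by
  obtain ⟨T, hTcard, hT⟩ := exists_finset_card_eq_pairwise_starColorsDisjoint col hcol _ hι
  let e : ι ≃ T := Fintype.equivOfCardEq (by rw [Fintype.card_coe, hTcard])
  refine ⟨fun i => e i, Subtype.val_injective.comp e.injective, fun i j hij => ?_⟩
  exact hT (e i).2 (e j).2 fun h => hij (e.injective (Subtype.ext h))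

theorem injective_color_of_pairwise_starColorsDisjoint {A B κ ι : Type} (col : A → B → κ)
    (hcol : ∀ b, Injective fun a => col a b) {g : ι → B}
    (hg : Pairwise (StarColorsDisjoint col on g)) :
    Injective fun p : A × ι => col p.1 (g p.2) := by
  rintro ⟨a, i⟩ ⟨a', j⟩ h
  by_cases hij : i = j
  · subst hij
    rw [show a = a' from hcol (g i) h]
  · exact absurd h (hg hij a a')

section CompleteBipartite

variable {A B : Type} {c : Sym2 (A ⊕ B) → ℕ}

theorem IsProperEdgeColoring.injective_inl
    (hc : IsProperEdgeColoring (completeBipartiteGraph A B) c) (a : A) :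
    Injective fun b : B => c s(Sum.inl a, Sum.inr b) := by
  intro b b' h
  by_contra hbb'
  refine hc _ (by simp) _ (by simp) ?_ ⟨Sum.inl a, by simp, by simp⟩ h
  simp [hbb']

theorem IsProperEdgeColoring.injective_inr
    (hc : IsProperEdgeColoring (completeBipartiteGraph A B) c) (b : B) :
    Injective fun a : A => c s(Sum.inl a, Sum.inr b) := by
  intro a a' h
  by_contra haa'
  refine hc _ (by simp) _ (by simp) ?_ ⟨Sum.inr b, by simp, by simp⟩ h
  simp [haa']

end CompleteBipartite

section TwoColoring

variable {α A B : Type} {F : SimpleGraph α} {χ : α → Bool}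

def sideMap (χ : α → Bool) (eL : {x // χ x} → A) (eR : {x // ¬χ x} → B) : α → A ⊕ B :=
  Sum.map eL eR ∘ (Equiv.sumCompl fun x => χ x = true).symm

@[simp]
theorem sideMap_coe_left (eL : {x // χ x} → A) (eR : {x // ¬χ x} → B) (u : {x // χ x}) :
    sideMap χ eL eR u = Sum.inl (eL u) := by
  simp [sideMap, Equiv.sumCompl_symm_apply_of_pos (p := fun x => χ x = true) u.2]

@[simp]
theorem sideMap_coe_right (eL : {x // χ x} → A) (eR : {x // ¬χ x} → B) (v : {x // ¬χ x}) :
    sideMap χ eL eR v = Sum.inr (eR v) := by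
  simp [sideMap, Equiv.sumCompl_symm_apply_of_neg (p := fun x => χ x = true) v.2]

theorem sideMap_injective {eL : {x // χ x} → A} {eR : {x // ¬χ x} → B}
    (hL : Injective eL) (hR : Injective eR) :
    Injective (sideMap χ eL eR) :=
  (hL.sumMap hR).comp (Equiv.injective _)

theorem exists_eq_left_right_of_mem_edgeSet (hχ : ∀ u v, F.Adj u v → χ u ≠ χ v)
    {e : Sym2 α} (he : e ∈ F.edgeSet) :
    ∃ (u : {x // χ x}) (v : {x // ¬χ x}), e = s(u.1, v.1) := by
  induction e using Sym2.ind with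
  | _ x y =>
    have := hχ x y he
    by_cases hx : χ x
    · exact ⟨⟨x, hx⟩, ⟨y, by simp_all⟩, rfl⟩
    · exact ⟨⟨y, by simp_all⟩, ⟨x, hx⟩, Sym2.eq_swap⟩

def homCompleteBipartiteGraph (hχ : ∀ u v, F.Adj u v → χ u ≠ χ v)
    (eL : {x // χ x} → A) (eR : {x // ¬χ x} → B) : F →g completeBipartiteGraph A B where
  toFun := sideMap χ eL eR
  map_rel' {x y} hxy := by
    have hxy := hχ x y hxy
    by_cases hx : χ x
    · simp [sideMap_coe_left eL eR ⟨x, hx⟩, sideMap_coe_right eL eR ⟨y, by simp_all⟩]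
    · simp [sideMap_coe_right eL eR ⟨x, hx⟩, sideMap_coe_left eL eR ⟨y, by simp_all⟩]

end TwoColoring

theorem hasRainbowCopy_completeBipartiteGraph {α A B : Type} [Fintype α] [Fintype A]
    [Fintype B] {F : SimpleGraph α} {χ : α → Bool} (hχ : ∀ u v, F.Adj u v → χ u ≠ χ v)
    {c : Sym2 (A ⊕ B) → ℕ} (hc : IsProperEdgeColoring (completeBipartiteGraph A B) c)
    (hA : Fintype.card {x // χ x} ≤ Fintype.card A)
    (hB : Fintype.card {x // ¬χ x} * (Fintype.card A ^ 2 + 1) ≤ Fintype.card B) :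
    HasRainbowCopy F (completeBipartiteGraph A B) c := by
  obtain ⟨eL⟩ := Function.Embedding.nonempty_of_card_le hA
  obtain ⟨eR, hR, hdisjoint⟩ := exists_injective_pairwise_starColorsDisjoint
    (fun a b => c s(Sum.inl a, Sum.inr b)) hc.injective_inl hB
  have hcolor := injective_color_of_pairwise_starColorsDisjoint _ hc.injective_inr hdisjoint
  refine ⟨homCompleteBipartiteGraph hχ eL eR, sideMap_injective eL.injective hR, ?_⟩
  intro e₁ he₁ e₂ he₂ h
  obtain ⟨u₁, v₁, rfl⟩ := exists_eq_left_right_of_mem_edgeSet hχ he₁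
  obtain ⟨u₂, v₂, rfl⟩ := exists_eq_left_right_of_mem_edgeSet hχ he₂
  have hpair : (eL u₁, v₁) = (eL u₂, v₂) := hcolor <| by
    simpa [homCompleteBipartiteGraph] using h
  simp_all

theorem exists_two_coloring_card_eq_of_mem_smallerClassSizes {α : Type} [Fintype α]
    {F : SimpleGraph α} {s : ℕ} (hs : s ∈ smallerClassSizes F) :
    ∃ χ : α → Bool, (∀ u v, F.Adj u v → χ u ≠ χ v) ∧ Fintype.card {x // χ x} = s := by
  obtain ⟨χ, hχ, rfl⟩ := hs
  rcases min_choice (Finset.univ.filter fun x => χ x = true).card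
      (Finset.univ.filter fun x => χ x = false).card with h | h
  · exact ⟨χ, hχ, by rw [h, Fintype.card_subtype]⟩
  · refine ⟨fun x => !χ x, fun u v huv => by simpa using hχ u v huv, ?_⟩
    rw [h, Fintype.card_subtype]
    simp

theorem stmt5_general {α : Type} [Fintype α] (F : SimpleGraph α)
    (s : ℕ) (hs : IsLeast (smallerClassSizes F) s) :
    ∃ n₀ : ℕ, ∀ n ≥ n₀, ∀ c : Sym2 (Fin s ⊕ Fin (n - s)) → ℕ,
      IsProperEdgeColoring (completeBipartiteGraph (Fin s) (Fin (n - s))) c →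
      HasRainbowCopy F (completeBipartiteGraph (Fin s) (Fin (n - s))) c := by
  obtain ⟨χ, hχ, hχs⟩ := exists_two_coloring_card_eq_of_mem_smallerClassSizes hs.1
  refine ⟨s + Fintype.card α * (s ^ 2 + 1), fun n hn c hc => ?_⟩
  refine hasRainbowCopy_completeBipartiteGraph hχ hc (by simp [hχs]) ?_
  calc Fintype.card {x // ¬χ x} * (Fintype.card (Fin s) ^ 2 + 1)
      ≤ Fintype.card α * (s ^ 2 + 1) := by
        rw [Fintype.card_fin]
        exact Nat.mul_le_mul_right _ (Fintype.card_subtype_le _)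
    _ ≤ Fintype.card (Fin (n - s)) := by
        rw [Fintype.card_fin]
        omega

/-- For a bipartite graph `F` with at least one edge and `s = p(F)`, every proper edge
coloring of `K_{s,n-s}` contains a rainbow copy of `F`, for all sufficiently large `n`. -/
theorem stmt5 {α : Type} [Fintype α] (F : SimpleGraph α)
    (hedge : F.edgeSet.Nonempty) (s : ℕ) (hs : IsLeast (smallerClassSizes F) s) :
    ∃ n₀ : ℕ, ∀ n ≥ n₀, ∀ c : Sym2 (Fin s ⊕ Fin (n - s)) → ℕ,
      IsProperEdgeColoring (completeBipartiteGraph (Fin s) (Fin (n - s))) c →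
      HasRainbowCopy F (completeBipartiteGraph (Fin s) (Fin (n - s))) c :=
  stmt5_general F s hs
end

section
/- Let F be a bipartite graph with at least one edge, p(F) = s, and let a, b be integers with a < s < b. Then the maximum number of copies of K_{a,b} in an n-vertex graph that admits a proper edge coloring without a rainbow copy of F equals (1+o(1))·N(K_{a,b}, K_{s-1, n-s+1}) as n → ∞. -/
open Filter SimpleGraph

/-! In a properly edge-coloured graph, an `s`-set `S` with a huge common neighbourhood yields a
rainbow copy of `F`: send the smaller colour class of `F` onto `S` and place the other vertices
greedily in the common neighbourhood so that the stars they send to `S` use pairwise disjoint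
colour sets. So without a rainbow `F` every `s`-set has `O(1)` common neighbours, and a copy of
`K_{a,b}` either has a `b`-side with fewer than `s` common neighbours (at most
`C(s-1,a)·C(n,b)` such copies) or an `a`-side that extends to an `s`-set (`O(n^s) = O(n^{b-1})`
copies). Conversely `K_{s-1,n-s+1}` contains no copy of `F` at all and has
`C(s-1,a)·C(n-s+1,b) = C(s-1,a)·C(n,b) - O(n^{b-1})` copies of `K_{a,b}`. -/

open Finset

section CopyCount

variable {α β γ : Type} {H : SimpleGraph α} {G : SimpleGraph β} {G' : SimpleGraph γ}

lemma copyCount_le_of_iso [Finite γ] (e : G ≃g G') :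
    _root_.copyCount H G ≤ _root_.copyCount H G' := by
  refine Set.ncard_le_ncard_of_injOn (Subgraph.map e.toHom) ?_ ?_ (Set.toFinite _)
  · rintro H' ⟨φ⟩
    exact ⟨φ.trans (e.toCopy.isoSubgraphMap H')⟩
  · intro H₁ _ H₂ _ h
    have hid : e.symm.toHom.comp e.toHom = Hom.id := by ext; simp
    simpa [← Subgraph.map_comp, hid] using congrArg (Subgraph.map e.symm.toHom) h

lemma copyCount_congr [Finite β] [Finite γ] (e : G ≃g G') :
    _root_.copyCount H G = _root_.copyCount H G' :=
  (copyCount_le_of_iso e).antisymm (copyCount_le_of_iso e.symm)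

end CopyCount

section Bicliques

variable {β : Type} (G : SimpleGraph β)

def bicliqueSubgraph [DecidableEq β] (A B : Finset β) : G.Subgraph where
  verts := ↑(A ∪ B)
  Adj x y := (x ∈ A ∧ y ∈ B ∨ x ∈ B ∧ y ∈ A) ∧ G.Adj x y
  adj_sub h := h.2
  edge_vert := by rintro x y ⟨⟨hx, -⟩ | ⟨hx, -⟩, -⟩ <;> simp [hx]
  symm := ⟨fun _ _ h => ⟨h.1.symm.imp And.symm And.symm, h.2.symm⟩⟩

def bicliques [Fintype β] [DecidableRel G.Adj] (a b : ℕ) : Finset (Finset β × Finset β) :=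
  {p ∈ univ.powersetCard a ×ˢ univ.powersetCard b | ∀ x ∈ p.1, ∀ y ∈ p.2, G.Adj x y}

variable {G}

lemma mem_bicliques [Fintype β] [DecidableRel G.Adj] {a b : ℕ} {p : Finset β × Finset β} :
    p ∈ bicliques G a b ↔
      #p.1 = a ∧ #p.2 = b ∧ ∀ x ∈ p.1, ∀ y ∈ p.2, G.Adj x y := by
  simp [bicliques, mem_powersetCard, and_assoc]

lemma disjoint_of_forall_adj {A B : Finset β} (h : ∀ x ∈ A, ∀ y ∈ B, G.Adj x y) :
    Disjoint A B :=
  disjoint_left.mpr fun x hxA hxB => G.irrefl (h x hxA x hxB)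

lemma exists_eq_bicliqueSubgraph_of_iso [DecidableEq β] {V W : Type} [Fintype V] [Fintype W]
    {H' : G.Subgraph} (φ : completeBipartiteGraph V W ≃g H'.coe) :
    ∃ A B : Finset β, #A = Fintype.card V ∧ #B = Fintype.card W ∧
      (∀ x ∈ A, ∀ y ∈ B, G.Adj x y) ∧ H' = bicliqueSubgraph G A B := by
  set g : V ⊕ W → β := fun p => φ p
  have hg : Function.Injective g := Subtype.val_injective.comp φ.injective
  have hadj : ∀ p q, H'.Adj (g p) (g q) ↔ (completeBipartiteGraph V W).Adj p q :=
    fun p q => φ.map_adj_iff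
  have hverts : ∀ x ∈ H'.verts, ∃ p, g p = x := fun x hx =>
    ⟨φ.symm ⟨x, hx⟩, by simp [g]⟩
  refine ⟨univ.image (g ∘ Sum.inl), univ.image (g ∘ Sum.inr),
    by rw [card_image_of_injective _ (hg.comp Sum.inl_injective), card_univ],
    by rw [card_image_of_injective _ (hg.comp Sum.inr_injective), card_univ], ?_, ?_⟩
  · simp only [mem_image, mem_univ, true_and, Function.comp_apply]
    rintro _ ⟨v, rfl⟩ _ ⟨w, rfl⟩
    exact H'.adj_sub ((hadj _ _).mpr (by simp))
  · refine Subgraph.ext (Set.ext fun x => ?_) (funext₂ fun x y => propext ?_)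
    · constructor
      · intro hx
        obtain ⟨v | w, rfl⟩ := hverts x hx <;> simp [bicliqueSubgraph, hg.eq_iff]
      · simp only [bicliqueSubgraph, coe_union, coe_image, Set.mem_union, Set.mem_image]
        rintro (⟨v, -, rfl⟩ | ⟨w, -, rfl⟩) <;> exact (φ _).2
    · simp only [bicliqueSubgraph, mem_image, mem_univ, true_and, Function.comp_apply]
      constructor
      · intro h
        obtain ⟨p, rfl⟩ := hverts x h.fst_mem
        obtain ⟨q, rfl⟩ := hverts y h.snd_mem
        refine ⟨?_, H'.adj_sub h⟩
        have := (hadj p q).mp h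
        rcases p with v | w <;> rcases q with v' | w' <;> simp_all
      · rintro ⟨⟨⟨v, rfl⟩, ⟨w, rfl⟩⟩ | ⟨⟨w, rfl⟩, ⟨v, rfl⟩⟩, -⟩ <;>
          exact (hadj _ _).mpr (by simp)

end Bicliques

section BicliqueCount

variable {β : Type} [DecidableEq β] {G : SimpleGraph β}

lemma bicliqueSubgraph_iso {A B : Finset β} (h : ∀ x ∈ A, ∀ y ∈ B, G.Adj x y) :
    Nonempty (completeBipartiteGraph (Fin #A) (Fin #B) ≃g (bicliqueSubgraph G A B).coe) := by
  have hAB := disjoint_of_forall_adj h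
  let f : Fin #A ⊕ Fin #B → (bicliqueSubgraph G A B).verts :=
    Sum.elim (fun i => ⟨A.equivFin.symm i, by simp [bicliqueSubgraph]⟩)
      (fun j => ⟨B.equivFin.symm j, by simp [bicliqueSubgraph]⟩)
  have hf : Function.Bijective f := by
    constructor
    · rintro (i | j) (i' | j') hii' <;>
        simp only [f, Sum.elim_inl, Sum.elim_inr, Subtype.mk.injEq] at hii'
      · exact congrArg _ (A.equivFin.symm.injective (Subtype.ext hii'))
      · exact (disjoint_left.mp hAB (A.equivFin.symm i).2 (hii' ▸ (B.equivFin.symm j').2)).elim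
      · exact (disjoint_left.mp hAB (hii' ▸ (A.equivFin.symm i').2) (B.equivFin.symm j).2).elim
      · exact congrArg _ (B.equivFin.symm.injective (Subtype.ext hii'))
    · rintro ⟨x, hx⟩
      rcases mem_union.mp (by simpa [bicliqueSubgraph] using hx) with hxA | hxB
      · exact ⟨Sum.inl (A.equivFin ⟨x, hxA⟩), by simp [f]⟩
      · exact ⟨Sum.inr (B.equivFin ⟨x, hxB⟩), by simp [f]⟩
  refine ⟨⟨Equiv.ofBijective f hf, ?_⟩⟩
  have hA : ∀ i, (A.equivFin.symm i : β) ∈ A := fun i => (A.equivFin.symm i).2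
  have hB : ∀ j, (B.equivFin.symm j : β) ∈ B := fun j => (B.equivFin.symm j).2
  intro p q
  change (bicliqueSubgraph G A B).Adj (f p) (f q) ↔ _
  rcases p with i | j <;> rcases q with i' | j' <;>
    simp only [f, Sum.elim_inl, Sum.elim_inr, bicliqueSubgraph, completeBipartiteGraph_adj,
      Sum.isLeft_inl, Sum.isRight_inl, Sum.isLeft_inr, Sum.isRight_inr]
  · simp [disjoint_left.mp hAB (hA i), disjoint_left.mp hAB (hA i')]
  · simp [hA, hB, h _ (hA i) _ (hB j')]
  · simp [hA, hB, (h _ (hA i') _ (hB j)).symm]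
  · simp [disjoint_right.mp hAB (hB j), disjoint_right.mp hAB (hB j')]

lemma choose_mul_choose_le_copyCount [Fintype β] {L R : Finset β}
    (h : ∀ x ∈ L, ∀ y ∈ R, G.Adj x y) (a b : ℕ) :
    (#L).choose a * (#R).choose b ≤
      _root_.copyCount (completeBipartiteGraph (Fin a) (Fin b)) G := by
  rw [← card_powersetCard, ← card_powersetCard, ← card_product, ← Set.ncard_coe_finset]
  refine Set.ncard_le_ncard_of_injOn (fun p => bicliqueSubgraph G p.1 p.2) ?_ ?_ (Set.toFinite _)
  · rintro ⟨A, B⟩ hAB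
    simp only [coe_product, Set.mem_prod, mem_coe, mem_powersetCard] at hAB
    obtain ⟨⟨hAL, rfl⟩, ⟨hBR, rfl⟩⟩ := hAB
    exact bicliqueSubgraph_iso fun x hx y hy => h x (hAL hx) y (hBR hy)
  · rintro ⟨A, B⟩ hAB ⟨A', B'⟩ hAB' heq
    simp only [coe_product, Set.mem_prod, mem_coe, mem_powersetCard] at hAB hAB'
    have hverts : A ∪ B = A' ∪ B' := coe_injective (congrArg Subgraph.verts heq)
    have hLR := disjoint_of_forall_adj h
    have hL : ∀ {X Y : Finset β}, X ⊆ L → Y ⊆ R → (X ∪ Y) ∩ L = X := fun hX hY => by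
      rw [union_inter_distrib_right, inter_eq_left.mpr hX,
        disjoint_iff_inter_eq_empty.mp (hLR.symm.mono_left hY), union_empty]
    have hR : ∀ {X Y : Finset β}, X ⊆ L → Y ⊆ R → (X ∪ Y) ∩ R = Y := fun hX hY => by
      rw [union_inter_distrib_right, inter_eq_left.mpr hY,
        disjoint_iff_inter_eq_empty.mp (hLR.mono_left hX), empty_union]
    simp only [Prod.mk.injEq]
    exact ⟨by rw [← hL hAB.1.1 hAB.2.1, hverts, hL hAB'.1.1 hAB'.2.1],
      by rw [← hR hAB.1.1 hAB.2.1, hverts, hR hAB'.1.1 hAB'.2.1]⟩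

lemma copyCount_le_card_bicliques [Fintype β] [DecidableRel G.Adj] (a b : ℕ) :
    _root_.copyCount (completeBipartiteGraph (Fin a) (Fin b)) G ≤ #(bicliques G a b) := by
  have hsub : {H' : G.Subgraph | Nonempty (completeBipartiteGraph (Fin a) (Fin b) ≃g H'.coe)} ⊆
      (fun p : Finset β × Finset β => bicliqueSubgraph G p.1 p.2) ''
        (bicliques G a b : Set (Finset β × Finset β)) := by
    rintro H' ⟨φ⟩
    obtain ⟨A, B, hA, hB, h, rfl⟩ := exists_eq_bicliqueSubgraph_of_iso φ
    exact ⟨(A, B), mem_bicliques.mpr ⟨by simpa using hA, by simpa using hB, h⟩, rfl⟩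
  calc _ ≤ _ := Set.ncard_le_ncard hsub (Set.toFinite _)
    _ ≤ _ := Set.ncard_image_le (Set.toFinite _)
    _ = _ := Set.ncard_coe_finset _

end BicliqueCount

section CommonNeighborhood

variable {β : Type} [Fintype β] [DecidableEq β] (G : SimpleGraph β) [DecidableRel G.Adj]

def commonNbhd (S : Finset β) : Finset β := {v | ∀ x ∈ S, G.Adj x v}

variable {G}

@[simp] lemma mem_commonNbhd {S : Finset β} {v : β} :
    v ∈ commonNbhd G S ↔ ∀ x ∈ S, G.Adj x v := by
  simp [commonNbhd]

/-- A biclique `(A, B)` either has `A` inside a common neighbourhood of fewer than `s` vertices,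
or `A` extends to an `s`-set `S ⊆ N(B)`, and then `B ⊆ N(S)`. -/
lemma card_bicliques_le {a b s M : ℕ} (has : a ≤ s)
    (hM : ∀ S : Finset β, #S = s → #(commonNbhd G S) ≤ M) :
    #(bicliques G a b) ≤
      (Fintype.card β).choose b * (s - 1).choose a +
        (Fintype.card β).choose s * (s.choose a * M.choose b) := by
  have hcover : bicliques G a b ⊆
      (univ.powersetCard b).biUnion (fun B => if #(commonNbhd G B) < s
        then (commonNbhd G B).powersetCard a ×ˢ {B} else ∅) ∪
      (univ.powersetCard s).biUnion
        (fun S => S.powersetCard a ×ˢ (commonNbhd G S).powersetCard b) := by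
    rintro ⟨A, B⟩ hAB
    obtain ⟨hA, hB, hadj⟩ := mem_bicliques.mp hAB
    have hAN : A ⊆ commonNbhd G B := fun x hx =>
      mem_commonNbhd.mpr fun y hy => (hadj x hx y hy).symm
    by_cases hlt : #(commonNbhd G B) < s
    · refine mem_union_left _ (mem_biUnion.mpr ⟨B, ?_, ?_⟩)
      · simp [mem_powersetCard, hB]
      · simp [hlt, mem_powersetCard, hAN, hA]
    · obtain ⟨S, hAS, hSN, hS⟩ :=
        exists_subsuperset_card_eq hAN (hA ▸ has) (not_lt.mp hlt)
      refine mem_union_right _ (mem_biUnion.mpr ⟨S, by simp [mem_powersetCard, hS], ?_⟩)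
      simp only [mem_product, mem_powersetCard]
      exact ⟨⟨hAS, hA⟩, fun y hy => mem_commonNbhd.mpr fun x hx =>
        (mem_commonNbhd.mp (hSN hx) y hy).symm, hB⟩
  refine (card_le_card hcover).trans ((card_union_le _ _).trans (add_le_add ?_ ?_))
  · refine (card_biUnion_le_card_mul _ _ ((s - 1).choose a) fun B _ => ?_).trans_eq (by simp)
    split_ifs with hlt
    · rw [card_product, card_singleton, mul_one, card_powersetCard]
      exact Nat.choose_le_choose _ (by omega)
    · simp
  · refine (card_biUnion_le_card_mul _ _ (s.choose a * M.choose b) fun S hS => ?_).trans_eq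
      (by simp)
    rw [card_product, card_powersetCard, card_powersetCard, (mem_powersetCard.mp hS).2]
    exact Nat.mul_le_mul_left _ (Nat.choose_le_choose _ (hM S (mem_powersetCard.mp hS).2))

end CommonNeighborhood

section Rainbow

variable {α β : Type} {G : SimpleGraph β} {c : Sym2 β → ℕ}

lemma IsProperEdgeColoring.eq_of_color_eq (hc : IsProperEdgeColoring G c) {x y z : β}
    (hy : G.Adj x y) (hz : G.Adj x z) (h : c s(x, y) = c s(x, z)) : y = z := by
  by_contra hne
  exact hc _ hy _ hz (Sym2.congr_right.not.mpr hne)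
    ⟨x, Sym2.mem_mk_left x y, Sym2.mem_mk_left x z⟩ h

variable [DecidableEq β]

def starColors (c : Sym2 β → ℕ) (S : Finset β) (y : β) : Finset ℕ :=
  S.image fun w => c s(w, y)

variable {S R : Finset β}

lemma card_filter_mem_starColors_le (hc : IsProperEdgeColoring G c)
    (hR : ∀ y ∈ R, ∀ x ∈ S, G.Adj x y) (γ : ℕ) :
    #{y ∈ R | γ ∈ starColors c S y} ≤ #S := by
  calc #{y ∈ R | γ ∈ starColors c S y}
      ≤ #(S.biUnion fun w => {y ∈ R | c s(w, y) = γ}) := card_le_card fun y hy => by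
        simp only [starColors, mem_filter, mem_image] at hy
        obtain ⟨hyR, w, hw, hwy⟩ := hy
        exact mem_biUnion.mpr ⟨w, hw, mem_filter.mpr ⟨hyR, hwy⟩⟩
    _ ≤ #S * 1 := card_biUnion_le_card_mul _ _ 1 fun w hw => card_le_one.mpr fun y hy y' hy' => by
        rw [mem_filter] at hy hy'
        exact hc.eq_of_color_eq (hR y hy.1 w hw) (hR y' hy'.1 w hw) (hy.2.trans hy'.2.symm)
    _ = #S := mul_one _

lemma card_filter_not_disjoint_starColors_le (hc : IsProperEdgeColoring G c)
    (hR : ∀ y ∈ R, ∀ x ∈ S, G.Adj x y) (y₀ : β) :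
    #{y ∈ R | ¬Disjoint (starColors c S y) (starColors c S y₀)} ≤ #S * #S := by
  calc #{y ∈ R | ¬Disjoint (starColors c S y) (starColors c S y₀)}
      ≤ #((starColors c S y₀).biUnion fun γ => {y ∈ R | γ ∈ starColors c S y}) :=
        card_le_card fun y hy => by
          obtain ⟨hyR, hy⟩ := mem_filter.mp hy
          obtain ⟨γ, hγ, hγ₀⟩ := not_disjoint_iff.mp hy
          exact mem_biUnion.mpr ⟨γ, hγ₀, mem_filter.mpr ⟨hyR, hγ⟩⟩
    _ ≤ #(starColors c S y₀) * #S :=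
        card_biUnion_le_card_mul _ _ _ fun γ _ => card_filter_mem_starColors_le hc hR γ
    _ ≤ #S * #S := Nat.mul_le_mul_right _ card_image_le

lemma exists_injOn_pairwise_disjoint_starColors [DecidableEq α]
    (hc : IsProperEdgeColoring G c) (hR : ∀ y ∈ R, ∀ x ∈ S, G.Adj x y)
    (V : Finset α) (hV : #V * (#S * #S + 1) < #R) :
    ∃ g : α → β, Set.InjOn g V ∧ Set.MapsTo g V R ∧
      (V : Set α).Pairwise fun u u' =>
        Disjoint (starColors c S (g u)) (starColors c S (g u')) := by
  induction V using Finset.induction_on with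
  | empty =>
    obtain ⟨y, -⟩ := card_pos.mp (by simpa using hV)
    exact ⟨fun _ => y, by simp, by simp [Set.MapsTo], by simp⟩
  | insert v V hv ih =>
    rw [card_insert_of_notMem hv] at hV
    obtain ⟨g, hinj, hmaps, hpair⟩ := ih (lt_of_le_of_lt (by nlinarith) hV)
    set Bad := V.image g ∪
      V.biUnion fun u => {y ∈ R | ¬Disjoint (starColors c S y) (starColors c S (g u))}
    have hBad : #Bad < #R := by
      calc #Bad ≤ #V + #V * (#S * #S) := (card_union_le _ _).trans (add_le_add card_image_le
            (card_biUnion_le_card_mul _ _ _ fun u _ =>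
              card_filter_not_disjoint_starColors_le hc hR (g u)))
        _ < #R := by nlinarith
    obtain ⟨y, hyR, hyBad⟩ := exists_mem_notMem_of_card_lt_card hBad
    have hyg : ∀ u ∈ V, g u ≠ y := fun u hu h =>
      hyBad (mem_union_left _ (mem_image.mpr ⟨u, hu, h⟩))
    have hydisj : ∀ u ∈ V, Disjoint (starColors c S y) (starColors c S (g u)) := fun u hu => by
      by_contra h
      exact hyBad (mem_union_right _ (mem_biUnion.mpr ⟨u, hu, mem_filter.mpr ⟨hyR, h⟩⟩))
    have heq : Set.EqOn (Function.update g v y) g V := fun u hu =>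
      Function.update_of_ne (ne_of_mem_of_not_mem hu hv) _ _
    refine ⟨Function.update g v y, ?_, ?_, ?_⟩
    · rw [coe_insert, Set.injOn_insert (mem_coe.not.mpr hv), Function.update_self]
      refine ⟨hinj.congr heq.symm, ?_⟩
      rintro ⟨u, hu, hgu⟩
      exact hyg u hu ((heq hu).symm.trans hgu)
    · intro u hu
      rcases mem_insert.mp hu with rfl | hu
      · simpa using hyR
      · rw [heq hu]
        exact hmaps hu
    · rw [coe_insert, Set.pairwise_insert]
      refine ⟨fun u hu u' hu' hne => ?_, fun u hu _ => ?_⟩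
      · simp only [heq hu, heq hu']
        exact hpair hu hu' hne
      · simp only [heq hu, Function.update_self]
        exact ⟨hydisj u hu, (hydisj u hu).symm⟩

end Rainbow

lemma exists_crossing_finset_of_mem_smallerClassSizes {α : Type} [Fintype α]
    {F : SimpleGraph α} {s : ℕ} (hs : s ∈ smallerClassSizes F) :
    ∃ T : Finset α, #T = s ∧ ∀ x y, F.Adj x y → (x ∈ T ↔ y ∉ T) := by
  obtain ⟨χ, hχ, rfl⟩ := hs
  have hcross : ∀ b₀ : Bool, ∀ x y, F.Adj x y → (χ x = b₀ ↔ ¬χ y = b₀) := by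
    intro b₀ x y h
    have := hχ x y h
    generalize χ x = p at this ⊢
    generalize χ y = q at this ⊢
    cases p <;> cases q <;> cases b₀ <;> simp_all
  rcases min_choice #{x | χ x = true} #{x | χ x = false} with h | h
  · exact ⟨({x | χ x = true} : Finset α), h.symm, fun x y hxy => by
      simpa using hcross true x y hxy⟩
  · exact ⟨({x | χ x = false} : Finset α), h.symm, fun x y hxy => by
      simpa using hcross false x y hxy⟩

/-- The embedding sends the side `T` of `F` onto `S` and the other side greedily into the
common neighbourhood of `S`, keeping the colour sets of the stars towards `S` disjoint. -/
lemma hasRainbowCopy_of_card_commonNbhd {α β : Type} [Fintype α] [DecidableEq α] [Fintype β]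
    [DecidableEq β] {F : SimpleGraph α} {G : SimpleGraph β} [DecidableRel G.Adj]
    {c : Sym2 β → ℕ} (hc : IsProperEdgeColoring G c) {T : Finset α}
    (hT : ∀ x y, F.Adj x y → (x ∈ T ↔ y ∉ T)) {S : Finset β} (hTS : #T = #S)
    (hS : Fintype.card α * (#S * #S + 1) < #(commonNbhd G S)) :
    HasRainbowCopy F G c := by
  set R := commonNbhd G S
  have hR : ∀ y ∈ R, ∀ x ∈ S, G.Adj x y := fun y hy => mem_commonNbhd.mp hy
  obtain ⟨g, hinj, hmaps, hpair⟩ :=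
    exists_injOn_pairwise_disjoint_starColors hc hR univ (by simpa using hS)
  let e := equivOfCardEq hTS
  let f : α → β := fun x => if h : x ∈ T then e ⟨x, h⟩ else g x
  have hfT : ∀ x ∈ T, f x ∈ S := fun x hx => by simp [f, hx]
  have hfg : ∀ x ∉ T, f x = g x := fun x hx => by simp [f, hx]
  have hfR : ∀ x ∉ T, f x ∈ R := fun x hx => hfg x hx ▸ hmaps (mem_univ x)
  have hRS : ∀ y ∈ R, y ∉ S := fun y hy hyS => G.irrefl (hR y hy y hyS)
  have horient : ∀ e ∈ F.edgeSet, ∃ x y, x ∈ T ∧ F.Adj x y ∧ e = s(x, y) := by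
    rintro ⟨x, y⟩ h
    by_cases hx : x ∈ T
    · exact ⟨x, y, hx, h, rfl⟩
    · exact ⟨y, x, by simpa [hx] using hT x y h, h.symm, Sym2.eq_swap⟩
  have hadj : ∀ x y, F.Adj x y → x ∈ T → G.Adj (f x) (f y) := fun x y h hx =>
    hR _ (hfR y ((hT x y h).mp hx)) _ (hfT x hx)
  have hhom : ∀ x y, F.Adj x y → G.Adj (f x) (f y) := fun x y h => by
    by_cases hx : x ∈ T
    · exact hadj x y h hx
    · exact (hadj y x h.symm (by simpa [hx] using hT x y h)).symm
  have hfinj : Function.Injective f := by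
    intro x y hxy
    by_cases hx : x ∈ T <;> by_cases hy : y ∈ T
    · simpa [f, hx, hy] using hxy
    · exact (hRS _ (hfR y hy) (hxy ▸ hfT x hx)).elim
    · exact (hRS _ (hfR x hx) (hxy ▸ hfT y hy)).elim
    · exact hinj (mem_univ x) (mem_univ y) (by rwa [hfg x hx, hfg y hy] at hxy)
  refine ⟨⟨f, hhom _ _⟩, hfinj, ?_⟩
  intro e₁ he₁ e₂ he₂ hcol
  obtain ⟨x₁, y₁, hx₁, h₁, rfl⟩ := horient e₁ he₁
  obtain ⟨x₂, y₂, hx₂, h₂, rfl⟩ := horient e₂ he₂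
  simp only [Sym2.map_mk, RelHom.coeFn_mk] at hcol
  have hmem : ∀ x y, F.Adj x y → x ∈ T → c s(f x, f y) ∈ starColors c S (g y) :=
    fun x y h hx => hfg y ((hT x y h).mp hx) ▸ mem_image_of_mem _ (hfT x hx)
  obtain rfl : y₁ = y₂ := by
    by_contra hne
    exact disjoint_left.mp (hpair (mem_univ y₁) (mem_univ y₂) hne) (hmem x₁ y₁ h₁ hx₁)
      (hcol ▸ hmem x₂ y₂ h₂ hx₂)
  rw [hfinj (hc.eq_of_color_eq (hhom x₁ y₁ h₁).symm (hhom x₂ y₁ h₂).symm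
    (by rwa [Sym2.eq_swap, Sym2.eq_swap (a := f y₁)]))]

lemma le_card_of_injective_hom_completeBipartiteGraph {α V W : Type} [Fintype α] [Fintype V]
    {F : SimpleGraph α} {s : ℕ} (hs : s ∈ lowerBounds (smallerClassSizes F))
    (f : F →g completeBipartiteGraph V W) (hf : Function.Injective f) :
    s ≤ Fintype.card V := by
  have hproper : ∀ u v, F.Adj u v → (f u).isLeft ≠ (f v).isLeft := fun u v h => by
    have := f.map_adj h
    revert this
    cases f u <;> cases f v <;> simp
  calc s ≤ #{x | (f x).isLeft = true} := (hs ⟨_, hproper, rfl⟩).trans (min_le_left _ _)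
    _ ≤ #(univ.map (Function.Embedding.inl : V ↪ V ⊕ W)) :=
        card_le_card_of_injOn f (fun x hx => by
          obtain ⟨v, hv⟩ := Sum.isLeft_iff.mp (mem_filter.mp hx).2
          simp [hv]) hf.injOn
    _ = Fintype.card V := by simp

lemma choose_mul_choose_le_copyCount_completeBipartiteGraph (p m a b : ℕ) :
    p.choose a * m.choose b ≤ _root_.copyCount (completeBipartiteGraph (Fin a) (Fin b))
      (completeBipartiteGraph (Fin p) (Fin m)) := by
  simpa using choose_mul_choose_le_copyCount
    (L := univ.map (Function.Embedding.inl : Fin p ↪ Fin p ⊕ Fin m))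
    (R := univ.map Function.Embedding.inr) (by simp) a b

def rainbowFreeCopyCounts {α γ : Type} (F : SimpleGraph α) (H : SimpleGraph γ) (n : ℕ) :
    Set ℕ :=
  {N | ∃ G : SimpleGraph (Fin n),
    (∃ c : Sym2 (Fin n) → ℕ, IsProperEdgeColoring G c ∧ ¬HasRainbowCopy F G c) ∧
      _root_.copyCount H G = N}

section RainbowFreeCopyCounts

variable {α γ : Type} [Fintype α] {F : SimpleGraph α} {H : SimpleGraph γ} {s : ℕ}

/-- `K_{p,m}` with `p < p(F)` contains no copy of `F` at all, so every colouring of it works. -/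
lemma copyCount_completeBipartiteGraph_mem_rainbowFreeCopyCounts
    (hs : s ∈ lowerBounds (smallerClassSizes F)) {p m n : ℕ} (hp : p < s) (hn : p + m = n) :
    _root_.copyCount H (completeBipartiteGraph (Fin p) (Fin m)) ∈
      rainbowFreeCopyCounts F H n := by
  let e := Iso.map (finSumFinEquiv.trans (finCongr hn)) (completeBipartiteGraph (Fin p) (Fin m))
  obtain ⟨c, hc⟩ := exists_injective_nat (Sym2 (Fin n))
  refine ⟨_, ⟨c, fun _ _ _ _ hne _ h => hne (hc h), ?_⟩, (copyCount_congr e).symm⟩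
  rintro ⟨f, hf, -⟩
  have := le_card_of_injective_hom_completeBipartiteGraph hs (e.symm.toHom.comp f)
    (e.symm.injective.comp hf)
  simp only [Fintype.card_fin] at this
  omega

lemma le_of_mem_rainbowFreeCopyCounts (hs : s ∈ smallerClassSizes F) {a b n N : ℕ}
    (has : a ≤ s)
    (hN : N ∈ rainbowFreeCopyCounts F (completeBipartiteGraph (Fin a) (Fin b)) n) :
    N ≤ n.choose b * (s - 1).choose a +
      n.choose s * (s.choose a * (Fintype.card α * (s * s + 1)).choose b) := by
  classical
  obtain ⟨G, ⟨c, hc, hnr⟩, rfl⟩ := hN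
  obtain ⟨T, hT, hcross⟩ := exists_crossing_finset_of_mem_smallerClassSizes hs
  have hM : ∀ S : Finset (Fin n), #S = s →
      #(commonNbhd G S) ≤ Fintype.card α * (s * s + 1) := fun S hS =>
    not_lt.mp fun h => hnr (hasRainbowCopy_of_card_commonNbhd hc hcross (hT.trans hS.symm)
      (hS ▸ h))
  simpa using (copyCount_le_card_bicliques a b).trans (card_bicliques_le has hM)

end RainbowFreeCopyCounts

lemma choose_succ_le_choose_sub_add (m j k : ℕ) :
    m.choose (k + 1) ≤ (m - j).choose (k + 1) + j * m.choose k := by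
  induction j with
  | zero => simp
  | succ j ih =>
    have hstep : (m - j).choose (k + 1) ≤ (m - (j + 1)).choose (k + 1) + m.choose k := by
      rcases Nat.eq_zero_or_pos (m - j) with h | h
      · simp [h, show m - (j + 1) = 0 by omega]
      · rw [show m - j = m - (j + 1) + 1 by omega, Nat.choose_succ_succ']
        have := Nat.choose_le_choose k (Nat.sub_le m (j + 1))
        omega
    rw [Nat.succ_mul]
    omega

lemma choose_mul_add_choose_mul_le {s k : ℕ} (hs : 0 < s) (hsk : s ≤ k) (n j C₁ C₂ : ℕ) :
    n.choose (k + 1) * C₁ + n.choose s * C₂ ≤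
      (n - j).choose (k + 1) * C₁ + (j * C₁ + C₂) * n ^ k := by
  have hk : n.choose k ≤ n ^ k := Nat.choose_le_pow n k
  have hs : n.choose s ≤ n ^ k := by
    rcases Nat.eq_zero_or_pos n with rfl | hn
    · simp [Nat.choose_eq_zero_of_lt hs]
    · exact (Nat.choose_le_pow n s).trans (Nat.pow_le_pow_right hn hsk)
  have := Nat.mul_le_mul_right C₁ (choose_succ_le_choose_sub_add n j k)
  have := Nat.mul_le_mul_right C₁ (Nat.mul_le_mul_left j hk)
  have := Nat.mul_le_mul_right C₂ hs
  nlinarith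

lemma pow_le_mul_choose_sub {n j k : ℕ} (hn : 2 * (j + k) ≤ n) :
    n ^ (k + 1) ≤ 2 ^ (k + 1) * (k + 1).factorial * (n - j).choose (k + 1) := by
  calc n ^ (k + 1) ≤ (2 * (n - j + 1 - (k + 1))) ^ (k + 1) := Nat.pow_le_pow_left (by omega) _
    _ ≤ 2 ^ (k + 1) * ((k + 1).factorial * (n - j).choose (k + 1)) := by
      rw [Nat.mul_pow, ← Nat.descFactorial_eq_factorial_mul_choose]
      exact Nat.mul_le_mul_left _ (Nat.pow_sub_le_descFactorial _ _)
    _ = _ := (Nat.mul_assoc _ _ _).symm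

lemma sub_isLittleO_of_le_add_pow {u v : ℕ → ℕ} {k K C : ℕ}
    (hvu : ∀ᶠ n in atTop, v n ≤ u n) (hu : ∀ᶠ n in atTop, u n ≤ v n + K * n ^ k)
    (hv : ∀ᶠ n in atTop, n ^ (k + 1) ≤ C * v n) :
    (fun n => (u n : ℝ) - v n) =o[atTop] (fun n => (v n : ℝ)) := by
  have hsub : (fun n => (u n : ℝ) - v n) =O[atTop] (fun n : ℕ => (n : ℝ) ^ k) := by
    refine Asymptotics.isBigO_iff.mpr ⟨K, ?_⟩
    filter_upwards [hvu, hu] with n h₁ h₂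
    have h₁' : (v n : ℝ) ≤ u n := by exact_mod_cast h₁
    have h₂' : (u n : ℝ) ≤ v n + K * n ^ k := by exact_mod_cast h₂
    rw [Real.norm_of_nonneg (by linarith), Real.norm_of_nonneg (by positivity)]
    linarith
  have hpow : (fun n : ℕ => (n : ℝ) ^ (k + 1)) =O[atTop] (fun n => (v n : ℝ)) := by
    refine Asymptotics.isBigO_iff.mpr ⟨C, ?_⟩
    filter_upwards [hv] with n h
    rw [Real.norm_of_nonneg (by positivity), Real.norm_of_nonneg (by positivity)]
    exact_mod_cast h
  have hlittle : (fun n : ℕ => (n : ℝ) ^ k) =o[atTop] (fun n : ℕ => (n : ℝ) ^ (k + 1)) :=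
    (Asymptotics.isLittleO_pow_pow_atTop_of_lt k.lt_succ_self).comp_tendsto
      tendsto_natCast_atTop_atTop
  exact (hsub.trans_isLittleO hlittle).trans_isBigO hpow

theorem stmt11_general {α : Type} [Fintype α] (F : SimpleGraph α)
    (s : ℕ)
    (hs : IsLeast (smallerClassSizes F) s) (a b : ℕ) (has : a < s) (hsb : s < b) :
    (fun n : ℕ =>
      ((sSup {N : ℕ | ∃ G : SimpleGraph (Fin n),
          (∃ c : Sym2 (Fin n) → ℕ, IsProperEdgeColoring G c ∧ ¬ HasRainbowCopy F G c) ∧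
          _root_.copyCount (completeBipartiteGraph (Fin a) (Fin b)) G = N} : ℕ) : ℝ) -
        ((_root_.copyCount (completeBipartiteGraph (Fin a) (Fin b))
          (completeBipartiteGraph (Fin (s - 1)) (Fin (n - s + 1))) : ℕ) : ℝ))
      =o[atTop] (fun n : ℕ =>
        ((_root_.copyCount (completeBipartiteGraph (Fin a) (Fin b))
          (completeBipartiteGraph (Fin (s - 1)) (Fin (n - s + 1))) : ℕ) : ℝ)) := by
  obtain ⟨k, rfl⟩ : ∃ k, b = k + 1 := ⟨b - 1, by omega⟩
  set K := completeBipartiteGraph (Fin a) (Fin (k + 1))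
  set v := fun n => _root_.copyCount K (completeBipartiteGraph (Fin (s - 1)) (Fin (n - s + 1)))
  set C₁ := (s - 1).choose a
  set C₂ := s.choose a * (Fintype.card α * (s * s + 1)).choose (k + 1)
  have hmem : ∀ n, s ≤ n → v n ∈ rainbowFreeCopyCounts F K n := fun n hn =>
    copyCount_completeBipartiteGraph_mem_rainbowFreeCopyCounts hs.2 (by omega) (by omega)
  have hup : ∀ n, ∀ N ∈ rainbowFreeCopyCounts F K n,
      N ≤ n.choose (k + 1) * C₁ + n.choose s * C₂ := fun n N hN =>
    le_of_mem_rainbowFreeCopyCounts hs.1 has.le hN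
  have hlow : ∀ n, s ≤ n → (n - (s - 1)).choose (k + 1) * C₁ ≤ v n := fun n hn => by
    rw [show n - (s - 1) = n - s + 1 by omega, mul_comm]
    exact choose_mul_choose_le_copyCount_completeBipartiteGraph _ _ _ _
  refine sub_isLittleO_of_le_add_pow (u := fun n => sSup (rainbowFreeCopyCounts F K n))
    (k := k) (K := (s - 1) * C₁ + C₂) (C := 2 ^ (k + 1) * (k + 1).factorial) ?_ ?_ ?_
  · filter_upwards [eventually_ge_atTop s] with n hn
    exact le_csSup ⟨_, hup n⟩ (hmem n hn)
  · filter_upwards [eventually_ge_atTop s] with n hn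
    calc sSup (rainbowFreeCopyCounts F K n) ≤ _ := csSup_le ⟨_, hmem n hn⟩ (hup n)
      _ ≤ _ := choose_mul_add_choose_mul_le (by omega) (by omega) n (s - 1) C₁ C₂
      _ ≤ _ := Nat.add_le_add_right (hlow n hn) _
  · filter_upwards [eventually_ge_atTop (2 * (s + k))] with n hn
    calc n ^ (k + 1) ≤ 2 ^ (k + 1) * (k + 1).factorial * (n - (s - 1)).choose (k + 1) :=
          pow_le_mul_choose_sub (by omega)
      _ ≤ _ * ((n - (s - 1)).choose (k + 1) * C₁) :=
          Nat.mul_le_mul_left _ (Nat.le_mul_of_pos_right _ (Nat.choose_pos (by omega)))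
      _ ≤ _ := Nat.mul_le_mul_left _ (hlow n (by omega))

/-- If `F` is bipartite with at least one edge, `p(F) = s` and `a < s < b`, then the
maximum number of copies of `K_{a,b}` in an `n`-vertex graph admitting a proper edge
coloring with no rainbow copy of `F` equals `(1+o(1))·N(K_{a,b}, K_{s-1,n-s+1})`. -/
theorem stmt11 {α : Type} [Fintype α] (F : SimpleGraph α)
    (hedge : F.edgeSet.Nonempty) (s : ℕ)
    (hs : IsLeast (smallerClassSizes F) s) (a b : ℕ) (has : a < s) (hsb : s < b) :
    (fun n : ℕ =>
      ((sSup {N : ℕ | ∃ G : SimpleGraph (Fin n),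
          (∃ c : Sym2 (Fin n) → ℕ, IsProperEdgeColoring G c ∧ ¬ HasRainbowCopy F G c) ∧
          _root_.copyCount (completeBipartiteGraph (Fin a) (Fin b)) G = N} : ℕ) : ℝ) -
        ((_root_.copyCount (completeBipartiteGraph (Fin a) (Fin b))
          (completeBipartiteGraph (Fin (s - 1)) (Fin (n - s + 1))) : ℕ) : ℝ))
      =o[atTop] (fun n : ℕ =>
        ((_root_.copyCount (completeBipartiteGraph (Fin a) (Fin b))
          (completeBipartiteGraph (Fin (s - 1)) (Fin (n - s + 1))) : ℕ) : ℝ)) :=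
  stmt11_general F s hs a b has hsb
end
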